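/- Let n ≥ 3 and let A be a real symmetric n×n matrix whose ordered eigenvalues κ₁ ≤ κ₂ ≤ ⋯ ≤ κₙ satisfy the 2-convexity condition κ₁ + κ₂ > 0, and suppose the trace H := tr(A) satisfies H ≤ 1. Then the matrix H·A - A² + 2·I is positive semidefinite; equivalently, every eigenvalue κᵢ(H - κᵢ) of H·A - A² is at least -2. (This is the Gauss-equation bound R_{ij} = H h_{ij} - h_{ik}h_{kj} showing the Ricci curvature of a 2-convex translating soliton is bounded from below.) -/
import Mathlib

theorem ricci_bounded_below_of_two_convex (n : ℕ) (hn : 3 ≤ n)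
    (A : Matrix (Fin n) (Fin n) ℝ) (hA : A.IsHermitian)
    (κ : Fin n → ℝ) (hmono : Monotone κ)
    (hκ : ∃ σ : Equiv.Perm (Fin n), hA.eigenvalues ∘ σ = κ)
    (h2conv : 0 < κ ⟨0, by omega⟩ + κ ⟨1, by omega⟩)
    (hH : A.trace ≤ 1) :
    (A.trace • A - A * A + (2 : ℝ) • (1 : Matrix (Fin n) (Fin n) ℝ)).PosSemidef ∧
      ∀ i, -2 ≤ κ i * (A.trace - κ i) := by
  obtain ⟨σ, hσ⟩ := hκ
  set H := A.trace with hHdef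
  set U : Matrix (Fin n) (Fin n) ℝ := (hA.eigenvectorUnitary : Matrix (Fin n) (Fin n) ℝ)
  set D : Matrix (Fin n) (Fin n) ℝ := Matrix.diagonal hA.eigenvalues with hDdef
  have hUU : star U * U = 1 := Unitary.coe_star_mul_self hA.eigenvectorUnitary
  have hUU' : U * star U = 1 := Unitary.coe_mul_star_self hA.eigenvectorUnitary
  have spec : A = U * D * star U := by
    have := hA.spectral_theorem
    simpa using this
  -- trace = sum of eigenvalues
  have htr : H = ∑ i, hA.eigenvalues i := by
    rw [hHdef]
    nth_rewrite 1 [spec]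
    rw [Matrix.trace_mul_cycle, hUU, one_mul, hDdef, Matrix.trace_diagonal]
  have hHsum : H = ∑ j, κ j := by
    rw [htr, ← Equiv.sum_comp σ hA.eigenvalues]
    exact Finset.sum_congr rfl fun j _ => congrFun hσ j
  -- index shorthands
  have h0 : (0 : ℕ) < n := by omega
  have h1 : (1 : ℕ) < n := by omega
  have h2 : (2 : ℕ) < n := by omega
  set i0 : Fin n := ⟨0, h0⟩
  set i1 : Fin n := ⟨1, h1⟩
  set i2 : Fin n := ⟨2, h2⟩
  have h2conv' : 0 < κ i0 + κ i1 := h2conv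
  have hκ1 : 0 < κ i1 := by
    have := hmono (show i0 ≤ i1 from Fin.mk_le_mk.mpr (by omega))
    linarith
  have hκge2 : ∀ j : Fin n, 2 ≤ (j : ℕ) → 0 < κ j := by
    intro j hj
    exact lt_of_lt_of_le hκ1 (hmono (Fin.mk_le_mk.mpr (by omega)))
  -- generic sum bound
  have sum3 : ∀ (i a b : Fin n), a ≠ b → a ≠ i → b ≠ i →
      (∀ j : Fin n, j ≠ a → j ≠ b → j ≠ i → 0 ≤ κ j) →
      κ a + κ b + κ i ≤ H := by
    intro i a b hab hai hbi hnn
    have hsum : κ a + κ b + κ i = ∑ j ∈ ({a, b, i} : Finset (Fin n)), κ j := by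
      rw [Finset.sum_insert (by simp [hab, hai]), Finset.sum_insert (by simp [hbi]),
        Finset.sum_singleton]
      ring
    rw [hHsum, hsum]
    refine Finset.sum_le_sum_of_subset_of_nonneg (Finset.subset_univ _) ?_
    intro j _ hj
    simp only [Finset.mem_insert, Finset.mem_singleton, not_or] at hj
    exact hnn j hj.1 hj.2.1 hj.2.2
  have hne01 : i0 ≠ i1 := by simp [i0, i1, Fin.ext_iff]
  have hne02 : i0 ≠ i2 := by simp [i0, i2, Fin.ext_iff]
  have hne12 : i1 ≠ i2 := by simp [i1, i2, Fin.ext_iff]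
  have hbig : ∀ j : Fin n, j ≠ i0 → j ≠ i1 → 0 ≤ κ j := by
    intro j hj0 hj1
    refine (hκge2 j ?_).le
    rcases Nat.lt_or_ge (j : ℕ) 2 with h | h
    · exfalso
      rcases Nat.lt_or_ge (j : ℕ) 1 with h' | h'
      · exact hj0 (Fin.ext (show (j : ℕ) = 0 by omega))
      · exact hj1 (Fin.ext (show (j : ℕ) = 1 by omega))
    · exact h
  have hκ2 : 0 < κ i2 := hκge2 i2 (by simp [i2])
  have h12 : κ i1 ≤ κ i2 := hmono (Fin.mk_le_mk.mpr (by omega))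
  have hS1 : κ i0 + κ i1 + κ i2 ≤ H :=
    sum3 i2 i0 i1 hne01 hne02 hne12 (fun j hj0 hj1 _ => hbig j hj0 hj1)
  -- the key eigenvalue inequality
  have key2 : ∀ i, -2 ≤ κ i * (H - κ i) := by
    intro i
    rcases Nat.lt_or_ge (i : ℕ) 2 with hi | hi
    · have hcase : i = i0 ∨ i = i1 := by
        rcases Nat.lt_or_ge (i : ℕ) 1 with h' | h'
        · exact Or.inl (Fin.ext (show (i : ℕ) = 0 by omega))
        · exact Or.inr (Fin.ext (show (i : ℕ) = 1 by omega))
      rcases hcase with he | he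
      · rw [he]
        have hS4 : κ i1 + κ i2 + κ i0 ≤ H :=
          sum3 i0 i1 i2 hne12 (Ne.symm hne01) (Ne.symm hne02)
            (fun j hj1 hj2 hj0 => hbig j hj0 hj1)
        rcases le_or_gt 0 (κ i0) with hpos | hneg
        · nlinarith
        · have hκ2lt : κ i2 < 1 := by linarith
          have hmlt : -1 < κ i0 := by linarith
          nlinarith
      · rw [he]
        have hS3 : κ i0 + κ i2 + κ i1 ≤ H :=
          sum3 i1 i0 i2 hne02 hne01 (Ne.symm hne12)
            (fun j hj0 hj2 hj1 => hbig j hj0 hj1)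
        nlinarith
    · have hκi : 0 < κ i := hκge2 i hi
      have hni0 : i0 ≠ i := fun h => by simp [i0, Fin.ext_iff] at h; omega
      have hni1 : i1 ≠ i := fun h => by simp [i1, Fin.ext_iff] at h; omega
      have hS2 : κ i0 + κ i1 + κ i ≤ H :=
        sum3 i i0 i1 hne01 hni0 hni1 (fun j hj0 hj1 _ => hbig j hj0 hj1)
      nlinarith
  refine ⟨?_, key2⟩
  -- positive semidefiniteness via spectral theorem
  have hg : ∀ j, 0 ≤ H * hA.eigenvalues j - hA.eigenvalues j * hA.eigenvalues j + 2 := by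
    intro j
    have hev : hA.eigenvalues j = κ (σ.symm j) := by
      have := congrFun hσ (σ.symm j)
      simpa using this
    have := key2 (σ.symm j)
    rw [hev]; nlinarith
  have hdiag : H • D - D * D + (2 : ℝ) • (1 : Matrix (Fin n) (Fin n) ℝ)
      = Matrix.diagonal (fun j => H * hA.eigenvalues j
          - hA.eigenvalues j * hA.eigenvalues j + 2) := by
    rw [hDdef, Matrix.diagonal_mul_diagonal]
    ext a b
    rcases eq_or_ne a b with rfl | hab
    · simp [Matrix.sub_apply, Matrix.add_apply, Matrix.smul_apply, Matrix.one_apply_eq]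
    · simp [Matrix.sub_apply, Matrix.add_apply, Matrix.smul_apply,
        Matrix.diagonal_apply_ne _ hab, Matrix.one_apply_ne hab]
  have hA2 : (U * D * star U) * (U * D * star U) = U * (D * D) * star U := by
    calc (U * D * star U) * (U * D * star U)
        = U * D * (star U * U) * D * star U := by simp only [Matrix.mul_assoc]
      _ = _ := by rw [hUU]; simp only [Matrix.mul_assoc, Matrix.one_mul]
  have e1 : U * (H • D) * star U = H • A := by
    rw [Matrix.mul_smul, Matrix.smul_mul]
    conv_rhs => rw [spec]
  have e2 : U * (D * D) * star U = A * A := by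
    conv_rhs => rw [spec]
    exact hA2.symm
  have e3 : U * ((2 : ℝ) • (1 : Matrix (Fin n) (Fin n) ℝ)) * star U
      = (2 : ℝ) • (1 : Matrix (Fin n) (Fin n) ℝ) := by
    rw [Matrix.mul_smul, Matrix.smul_mul, Matrix.mul_one, hUU']
  have hM : H • A - A * A + (2 : ℝ) • (1 : Matrix (Fin n) (Fin n) ℝ)
      = U * Matrix.diagonal (fun j => H * hA.eigenvalues j
          - hA.eigenvalues j * hA.eigenvalues j + 2) * star U := by
    rw [← hdiag, Matrix.mul_add, Matrix.add_mul, Matrix.mul_sub, Matrix.sub_mul, e1, e2, e3]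
  rw [hM, Matrix.star_eq_conjTranspose]
  exact (Matrix.posSemidef_diagonal_iff.mpr hg).mul_mul_conjTranspose_same U
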